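/- Let S : Set (ℕ × ℕ) encode a set of proofs by pairs (m, k) where m is the size of the proof's conclusion and k is the size of the proof, and assume that for every m > 0 there exists k with (m, k) ∈ S. Define F_S : ℕ → ℕ by F_S 0 = 0 and F_S m = sInf {k | (m, k) ∈ S} for m > 0. Then F_S is a super-polynomial function if and only if S is both unlimited (for every n ∈ ℕ there exists (m, k) ∈ S with k > n) and a set of super-polynomially sized proofs (for every q ∈ ℕ there exists n₀ such that for every (m, k) ∈ S with m > n₀ one has k > m^q). (This is the paper's invoked equivalence: F_NHam is super-polynomial if and only if NHam is an unlimited set of super-polynomial proofs.) -/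
import Mathlib


theorem superpoly_minsize_iff_unlimited_and_superpoly_proofs
    (S : Set (ℕ × ℕ)) (hS : ∀ m : ℕ, m > 0 → ∃ k, (m, k) ∈ S)
    (F : ℕ → ℕ) (hF0 : F 0 = 0)
    (hF : ∀ m : ℕ, m > 0 → F m = sInf {k | (m, k) ∈ S}) :
    (∀ q : ℕ, ∃ n₀ : ℕ, ∀ m : ℕ, m > n₀ → F m > m ^ q) ↔
      ((∀ n : ℕ, ∃ m k : ℕ, (m, k) ∈ S ∧ k > n) ∧
        (∀ q : ℕ, ∃ n₀ : ℕ, ∀ m k : ℕ, (m, k) ∈ S → m > n₀ → k > m ^ q)) := by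
  have hmem : ∀ m : ℕ, m > 0 → (m, F m) ∈ S := by
    intro m hm
    have hne : {k | (m, k) ∈ S}.Nonempty := hS m hm
    have := Nat.sInf_mem hne
    rwa [hF m hm]
  constructor
  · intro h
    constructor
    · intro n
      obtain ⟨n₀, h1⟩ := h 1
      refine ⟨max n₀ n + 1, F (max n₀ n + 1), hmem _ (Nat.succ_pos _), ?_⟩
      have := h1 (max n₀ n + 1) (by omega)
      have : F (max n₀ n + 1) > max n₀ n + 1 := by simpa using this
      omega
    · intro q
      obtain ⟨n₀, h1⟩ := h q
      refine ⟨n₀, fun m k hk hm => ?_⟩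
      have hFm := h1 m hm
      have hpos : m > 0 := by
        by_contra h'
        push_neg at h'
        interval_cases m
        simp [hF0] at hFm
      have hle : F m ≤ k := by
        rw [hF m hpos]; exact Nat.sInf_le hk
      omega
  · rintro ⟨_, h2⟩ q
    obtain ⟨n₀, h⟩ := h2 q
    refine ⟨n₀, fun m hm => ?_⟩
    exact h m (F m) (hmem m (by omega)) hm
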